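/- Let S ⊂ ℝ^d be a nonempty compact convex set with diameter D, let f : ℝ^d → ℝ have L-Lipschitz gradient on S with G := sup_{x∈S} ‖∇f(x)‖ < ∞, let C ≥ max{L D², G D}, δ ≥ 0, and f* := inf_{x ∈ S} f(x). Suppose each g_δ(x^k) satisfies |⟨∇f(x^k) − g_δ(x^k), s − x^k⟩| ≤ δ for all s ∈ S, and the iterates follow s^k ∈ argmin_{s ∈ S} ⟨g_δ(x^k), s − x^k⟩, g̃_k = ⟨g_δ(x^k), x^k − s^k⟩, x^{k+1} = x^k + (max{g̃_k − δ, 0}/C)(s^k − x^k), starting from x^0 ∈ S. Then for every K ≥ 0, min_{0 ≤ k ≤ K} G(x^k) ≤ √(2C (f(x^0) − f*)/(K+1)) + 2δ, where G(x) = max_{s ∈ S} ⟨∇f(x), x − s⟩ is the Frank–Wolfe gap. -/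

import Mathlib

/-!
With step length `hₖ = max (g̃ₖ - δ) 0` and step `hₖ / C`, the oracle error gives
`hₖ ≤ ⟪∇f(xᵏ), xᵏ - sᵏ⟫ ≤ G D ≤ C`, so the iterates stay in `S`, and the descent lemma together
with `L ‖sᵏ - xᵏ‖² ≤ C` shows that every step decreases `f` by at least `hₖ² / (2C)`.
Telescoping gives `∑ₖ₌₀ᴷ hₖ² ≤ 2C (f(x⁰) - f*)`, so the smallest `hₖ` is at most
`√(2C (f(x⁰) - f*) / (K + 1))`. Finally the true gap at `xᵏ` exceeds `g̃ₖ` by at most `δ`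
(oracle error plus minimality of `sᵏ`), and `g̃ₖ` exceeds `hₖ` by at most `δ`.
-/

open RealInnerProductSpace

section Descent

variable {E : Type*} [NormedAddCommGroup E] [InnerProductSpace ℝ E] [CompleteSpace E]
  {S : Set E} {f : E → ℝ} {L : ℝ}

theorem hasDerivAt_comp_add_smul {x v : E} {t : ℝ} (hf : DifferentiableAt ℝ f (x + t • v)) :
    HasDerivAt (fun t : ℝ => f (x + t • v)) ⟪gradient f (x + t • v), v⟫ t := by
  have hline : HasDerivAt (fun t : ℝ => x + t • v) v t := by
    simpa using ((hasDerivAt_id t).smul_const v).const_add x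
  have := hf.hasGradientAt.hasFDerivAt.comp_hasDerivAt t hline
  rwa [InnerProductSpace.toDual_apply_apply] at this

theorem Convex.apply_le_add_inner_gradient_add_sq (hS : Convex ℝ S)
    (hdiff : ∀ x ∈ S, DifferentiableAt ℝ f x)
    (hLip : ∀ x ∈ S, ∀ y ∈ S, ‖gradient f x - gradient f y‖ ≤ L * ‖x - y‖)
    {x y : E} (hx : x ∈ S) (hy : y ∈ S) :
    f y ≤ f x + ⟪gradient f x, y - x⟫ + L / 2 * ‖y - x‖ ^ 2 := by
  set v := y - x
  have hseg : ∀ t ∈ Set.Icc (0 : ℝ) 1, x + t • v ∈ S := fun t ht => hS.add_smul_sub_mem hx hy ht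
  -- `φ` is antitone on `[0, 1]`; comparing `φ 1` with `φ 0` is the claim.
  set φ : ℝ → ℝ := fun t => f (x + t • v) - t * ⟪gradient f x, v⟫ - L / 2 * ‖v‖ ^ 2 * t ^ 2
  have hφ' : ∀ t ∈ Set.Icc (0 : ℝ) 1, HasDerivAt φ
      (⟪gradient f (x + t • v) - gradient f x, v⟫ - L * ‖v‖ ^ 2 * t) t := by
    intro t ht
    refine (((hasDerivAt_comp_add_smul (hdiff _ (hseg t ht))).sub
      ((hasDerivAt_id t).mul_const ⟪gradient f x, v⟫)).sub
      ((hasDerivAt_pow 2 t).const_mul (L / 2 * ‖v‖ ^ 2))).congr_deriv ?_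
    rw [inner_sub_left]
    ring
  have hφ'_nonpos : ∀ t ∈ Set.Icc (0 : ℝ) 1,
      ⟪gradient f (x + t • v) - gradient f x, v⟫ - L * ‖v‖ ^ 2 * t ≤ 0 := by
    intro t ht
    have hstep : ‖x + t • v - x‖ = t * ‖v‖ := by
      rw [add_sub_cancel_left, norm_smul, Real.norm_of_nonneg ht.1]
    have := calc ⟪gradient f (x + t • v) - gradient f x, v⟫
        ≤ ‖gradient f (x + t • v) - gradient f x‖ * ‖v‖ := real_inner_le_norm _ _
      _ ≤ L * ‖x + t • v - x‖ * ‖v‖ := by gcongr; exact hLip _ (hseg t ht) _ hx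
    rw [hstep] at this
    linarith
  have hanti : AntitoneOn φ (Set.Icc 0 1) :=
    antitoneOn_of_hasDerivWithinAt_nonpos (convex_Icc 0 1)
      (fun t ht => (hφ' t ht).continuousAt.continuousWithinAt)
      (fun t ht => (hφ' t (interior_subset ht)).hasDerivWithinAt)
      (fun t ht => hφ'_nonpos t (interior_subset ht))
  have := hanti (Set.left_mem_Icc.2 zero_le_one) (Set.right_mem_Icc.2 zero_le_one) zero_le_one
  simp only [φ, v, one_smul, add_sub_cancel, zero_smul, add_zero] at this
  linarith

end Descent

theorem Convex.add_div_smul_sub_mem {E : Type*} [AddCommGroup E] [Module ℝ E] {S : Set E}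
    (hS : Convex ℝ S) {x y : E} (hx : x ∈ S) (hy : y ∈ S) {a b : ℝ} (ha : 0 ≤ a) (hab : a ≤ b) :
    x + (a / b) • (y - x) ∈ S :=
  hS.add_smul_sub_mem hx hy ⟨div_nonneg ha (ha.trans hab), div_le_one_of_le₀ hab (ha.trans hab)⟩

section Bounded

variable {E F : Type*} [SeminormedAddCommGroup E] [SeminormedAddCommGroup F] {S : Set E}

theorem Bornology.IsBounded.norm_sub_le_diam (hS : Bornology.IsBounded S) {x y : E} (hx : x ∈ S)
    (hy : y ∈ S) : ‖x - y‖ ≤ Metric.diam S :=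
  dist_eq_norm x y ▸ Metric.dist_le_diam_of_mem hS hx hy

theorem Bornology.IsBounded.bddAbove_norm_image (hS : Bornology.IsBounded S) {u : E → F} {L : ℝ}
    (hu : ∀ x ∈ S, ∀ y ∈ S, ‖u x - u y‖ ≤ L * ‖x - y‖) : BddAbove ((fun x => ‖u x‖) '' S) := by
  rcases S.eq_empty_or_nonempty with rfl | ⟨x₀, hx₀⟩
  · simp
  refine ⟨‖u x₀‖ + |L| * Metric.diam S, ?_⟩
  rintro _ ⟨x, hx, rfl⟩
  calc ‖u x‖ ≤ ‖u x₀‖ + ‖u x - u x₀‖ := norm_le_norm_add_norm_sub' _ _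
    _ ≤ ‖u x₀‖ + |L| * Metric.diam S := by
      gcongr
      exact (hu x hx x₀ hx₀).trans
        (mul_le_mul (le_abs_self L) (hS.norm_sub_le_diam hx hx₀) (norm_nonneg _) (abs_nonneg L))

theorem Bornology.IsBounded.mul_norm_sub_sq_le (hS : Bornology.IsBounded S) {x y : E}
    (hx : x ∈ S) (hy : y ∈ S) {L C : ℝ} (hC : 0 ≤ C) (hLC : L * Metric.diam S ^ 2 ≤ C) :
    L * ‖x - y‖ ^ 2 ≤ C := by
  rcases le_or_gt 0 L with hL | hL
  · have hdist := pow_le_pow_left₀ (norm_nonneg _) (hS.norm_sub_le_diam hx hy) 2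
    exact (mul_le_mul_of_nonneg_left hdist hL).trans hLC
  · nlinarith [sq_nonneg ‖x - y‖]

end Bounded

theorem inner_le_sSup_norm_image_mul_diam {E : Type*} [NormedAddCommGroup E]
    [InnerProductSpace ℝ E] {S : Set E} (hS : Bornology.IsBounded S) {u : E → E}
    (hu : BddAbove ((fun x => ‖u x‖) '' S)) {x y : E} (hx : x ∈ S) (hy : y ∈ S) :
    ⟪u x, x - y⟫ ≤ sSup ((fun x => ‖u x‖) '' S) * Metric.diam S := by
  calc ⟪u x, x - y⟫ ≤ ‖u x‖ * ‖x - y‖ := real_inner_le_norm _ _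
    _ ≤ _ := mul_le_mul (le_csSup hu ⟨x, hx, rfl⟩) (hS.norm_sub_le_diam hx hy) (norm_nonneg _)
        (Real.sSup_nonneg (by rintro _ ⟨_, _, rfl⟩; exact norm_nonneg _))

section Step

variable {E : Type*} [NormedAddCommGroup E] [InnerProductSpace ℝ E] {S : Set E}

theorem Convex.sq_le_two_mul_decrease_of_short_step [CompleteSpace E] (hS : Convex ℝ S)
    {f : E → ℝ} {L : ℝ} (hdiff : ∀ x ∈ S, DifferentiableAt ℝ f x)
    (hLip : ∀ x ∈ S, ∀ y ∈ S, ‖gradient f x - gradient f y‖ ≤ L * ‖x - y‖)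
    {x s : E} (hx : x ∈ S) (hs : s ∈ S) {C h : ℝ} (hLC : L * ‖s - x‖ ^ 2 ≤ C) (h0 : 0 ≤ h)
    (hhC : h ≤ C) (hh : h ≤ ⟪gradient f x, x - s⟫) :
    h ^ 2 ≤ 2 * C * (f x - f (x + (h / C) • (s - x))) := by
  set γ := h / C
  have hγ0 : 0 ≤ γ := div_nonneg h0 (h0.trans hhC)
  have hCγ : C * γ = h := mul_div_cancel_of_imp' fun hC => by linarith
  have hdesc := hS.apply_le_add_inner_gradient_add_sq hdiff hLip hx
    (hS.add_div_smul_sub_mem hx hs h0 hhC)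
  have hinner : ⟪gradient f x, γ • (s - x)⟫ = -(γ * ⟪gradient f x, x - s⟫) := by
    rw [real_inner_smul_right, ← neg_sub x s, inner_neg_right, mul_neg]
  rw [add_sub_cancel_left, hinner, norm_smul, Real.norm_of_nonneg hγ0] at hdesc
  nlinarith [mul_le_mul_of_nonneg_left hh hγ0, mul_le_mul_of_nonneg_left hLC (sq_nonneg γ)]

/-- The step length `max (g̃ₖ - δ, 0)` of the paper, with `g̃ₖ = ⟪g, x - s⟫`. -/
def fwStepLength (g x s : E) (δ : ℝ) : ℝ := max (⟪g, x - s⟫ - δ) 0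

theorem sub_le_fwStepLength (g x s : E) (δ : ℝ) : ⟪g, x - s⟫ - δ ≤ fwStepLength g x s δ :=
  le_max_left _ _

variable {g x s u : E} {δ C : ℝ}

theorem fwStepLength_nonneg : 0 ≤ fwStepLength g x s δ := le_max_right _ _

theorem abs_inner_sub_sub_eq_abs_sub_inner (u g x t : E) :
    |⟪u - g, t - x⟫| = |⟪u, x - t⟫ - ⟪g, x - t⟫| := by
  rw [← inner_sub_left, ← neg_sub x t, inner_neg_right, abs_neg]

theorem fwStepLength_le (hδ : |⟪u - g, s - x⟫| ≤ δ) (hC : 0 ≤ C) (huC : ⟪u, x - s⟫ ≤ C) :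
    fwStepLength g x s δ ≤ C := by
  rw [abs_inner_sub_sub_eq_abs_sub_inner, abs_sub_le_iff] at hδ
  exact max_le (by linarith [hδ.2]) hC

theorem inner_le_fwStepLength_add (horacle : ∀ t ∈ S, |⟪u - g, t - x⟫| ≤ δ)
    (hmin : ∀ t ∈ S, ⟪g, s - x⟫ ≤ ⟪g, t - x⟫) {t : E} (ht : t ∈ S) :
    ⟪u, x - t⟫ ≤ fwStepLength g x s δ + 2 * δ := by
  have hδ := abs_sub_le_iff.1 ((abs_inner_sub_sub_eq_abs_sub_inner u g x t).symm ▸ horacle t ht)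
  have hgt : ⟪g, x - t⟫ ≤ ⟪g, x - s⟫ := by
    have := hmin t ht
    rw [← neg_sub x s, ← neg_sub x t, inner_neg_right, inner_neg_right] at this
    linarith
  linarith [sub_le_fwStepLength g x s δ, hδ.1]

theorem Convex.sq_fwStepLength_le [CompleteSpace E] (hS : Convex ℝ S) {f : E → ℝ} {L : ℝ}
    (hdiff : ∀ x ∈ S, DifferentiableAt ℝ f x)
    (hLip : ∀ x ∈ S, ∀ y ∈ S, ‖gradient f x - gradient f y‖ ≤ L * ‖x - y‖)
    (hx : x ∈ S) (hs : s ∈ S) (hδ : |⟪gradient f x - g, s - x⟫| ≤ δ)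
    (hLC : L * ‖s - x‖ ^ 2 ≤ C) (hhC : fwStepLength g x s δ ≤ C) :
    fwStepLength g x s δ ^ 2 ≤
      2 * C * (f x - f (x + (fwStepLength g x s δ / C) • (s - x))) := by
  rcases max_cases (⟪g, x - s⟫ - δ) 0 with ⟨hmax, -⟩ | ⟨hmax, -⟩
  · refine hS.sq_le_two_mul_decrease_of_short_step hdiff hLip hx hs hLC fwStepLength_nonneg hhC ?_
    rw [abs_inner_sub_sub_eq_abs_sub_inner, abs_sub_le_iff] at hδ
    rw [fwStepLength, hmax]
    linarith [hδ.2]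
  · simp [fwStepLength, hmax]

end Step

theorem sum_range_le_mul_sub_of_le_mul_sub {a u : ℕ → ℝ} {c m : ℝ} {n : ℕ} (hc : 0 ≤ c)
    (h : ∀ k, a k ≤ c * (u k - u (k + 1))) (hm : m ≤ u n) :
    ∑ k ∈ Finset.range n, a k ≤ c * (u 0 - m) :=
  calc ∑ k ∈ Finset.range n, a k ≤ ∑ k ∈ Finset.range n, c * (u k - u (k + 1)) :=
        Finset.sum_le_sum fun k _ => h k
    _ = c * (u 0 - u n) := by rw [← Finset.mul_sum, Finset.sum_range_sub']
    _ ≤ c * (u 0 - m) := by gcongr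

theorem exists_le_sqrt_div_of_sum_sq_le {a : ℕ → ℝ} (ha : ∀ k, 0 ≤ a k) {B : ℝ} (K : ℕ)
    (hB : ∑ k ∈ Finset.range (K + 1), a k ^ 2 ≤ B) : ∃ k ≤ K, a k ≤ √(B / (K + 1)) := by
  obtain ⟨k, hk, hmin⟩ := (Finset.range (K + 1)).exists_min_image a Finset.nonempty_range_add_one
  refine ⟨k, Nat.lt_succ_iff.1 (Finset.mem_range.1 hk), Real.le_sqrt_of_sq_le ?_⟩
  rw [le_div_iff₀ (by positivity)]
  calc a k ^ 2 * (K + 1) = ∑ _ ∈ Finset.range (K + 1), a k ^ 2 := by simp [mul_comm]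
    _ ≤ ∑ j ∈ Finset.range (K + 1), a j ^ 2 :=
      Finset.sum_le_sum fun j hj => pow_le_pow_left₀ (ha k) (hmin j hj) 2
    _ ≤ B := hB

theorem nonconvex_fw_delta_oracle_rate_general {d : ℕ}
    (S : Set (EuclideanSpace ℝ (Fin d)))
    (hScomp : IsCompact S) (hSconv : Convex ℝ S)
    (f : EuclideanSpace ℝ (Fin d) → ℝ) (L C δ : ℝ)
    (hdiff : ∀ x ∈ S, DifferentiableAt ℝ f x)
    (hLip : ∀ x ∈ S, ∀ y ∈ S, ‖gradient f x - gradient f y‖ ≤ L * ‖x - y‖)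
    (hC : C ≥ max (L * (Metric.diam S) ^ 2)
      (sSup ((fun x => ‖gradient f x‖) '' S) * Metric.diam S))
    (x s g : ℕ → EuclideanSpace ℝ (Fin d))
    (hx0 : x 0 ∈ S)
    (horacle : ∀ k, ∀ t ∈ S, |⟪gradient f (x k) - g k, t - x k⟫| ≤ δ)
    (hsS : ∀ k, s k ∈ S)
    (hmin : ∀ k, ∀ t ∈ S, ⟪g k, s k - x k⟫ ≤ ⟪g k, t - x k⟫)
    (hupd : ∀ k, x (k + 1) =
      x k + (max (⟪g k, x k - s k⟫ - δ) 0 / C) • (s k - x k)) :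
    ∀ K : ℕ, ∃ k ≤ K,
      sSup ((fun t => ⟪gradient f (x k), x k - t⟫) '' S) ≤
        Real.sqrt (2 * C * (f (x 0) - sInf (f '' S)) / (K + 1)) + 2 * δ := by
  intro K
  have hSb := hScomp.isBounded
  have hCG := le_of_max_le_right hC
  have hC0 : 0 ≤ C := (mul_nonneg (Real.sSup_nonneg (by rintro _ ⟨_, _, rfl⟩; positivity))
    Metric.diam_nonneg).trans hCG
  have hgradC : ∀ y ∈ S, ∀ t ∈ S, ⟪gradient f y, y - t⟫ ≤ C := fun y hy t ht =>
    (inner_le_sSup_norm_image_mul_diam hSb (hSb.bddAbove_norm_image hLip) hy ht).trans hCG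
  set h : ℕ → ℝ := fun k => fwStepLength (g k) (x k) (s k) δ
  have hhC : ∀ k, x k ∈ S → h k ≤ C := fun k hxk =>
    fwStepLength_le (horacle k _ (hsS k)) hC0 (hgradC _ hxk _ (hsS k))
  have hxS : ∀ k, x k ∈ S := by
    intro k
    induction k with
    | zero => exact hx0
    | succ k ih =>
      rw [hupd k]
      exact hSconv.add_div_smul_sub_mem ih (hsS k) fwStepLength_nonneg (hhC k ih)
  have hdecrease : ∀ k, h k ^ 2 ≤ 2 * C * (f (x k) - f (x (k + 1))) := fun k => by
    rw [hupd k]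
    exact hSconv.sq_fwStepLength_le hdiff hLip (hxS k) (hsS k) (horacle k _ (hsS k))
      (hSb.mul_norm_sub_sq_le (hsS k) (hxS k) hC0 (le_of_max_le_left hC)) (hhC k (hxS k))
  have hfS := hScomp.bddBelow_image fun y hy => (hdiff y hy).continuousAt.continuousWithinAt
  have hsum : ∑ k ∈ Finset.range (K + 1), h k ^ 2 ≤ 2 * C * (f (x 0) - sInf (f '' S)) :=
    sum_range_le_mul_sub_of_le_mul_sub (by positivity) hdecrease
      (csInf_le hfS ⟨_, hxS (K + 1), rfl⟩)
  obtain ⟨k, hkK, hk⟩ := exists_le_sqrt_div_of_sum_sq_le (fun _ => fwStepLength_nonneg) K hsum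
  refine ⟨k, hkK, csSup_le (Set.Nonempty.image _ ⟨x 0, hx0⟩) ?_⟩
  rintro _ ⟨t, ht, rfl⟩
  linarith [inner_le_fwStepLength_add (horacle k) (hmin k) ht]

/-- Theorem 3.2 (nonconvex Frank–Wolfe with a δ-oracle): the smallest
Frank–Wolfe gap among the first `K+1` iterates is at most
`√(2C (f(x⁰) - f*)/(K+1)) + 2δ`. -/
theorem nonconvex_fw_delta_oracle_rate {d : ℕ}
    (S : Set (EuclideanSpace ℝ (Fin d)))
    (hSne : S.Nonempty) (hScomp : IsCompact S) (hSconv : Convex ℝ S)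
    (f : EuclideanSpace ℝ (Fin d) → ℝ) (L C δ : ℝ) (hδ : 0 ≤ δ)
    (hdiff : ∀ x ∈ S, DifferentiableAt ℝ f x)
    (hLip : ∀ x ∈ S, ∀ y ∈ S, ‖gradient f x - gradient f y‖ ≤ L * ‖x - y‖)
    (hC : C ≥ max (L * (Metric.diam S) ^ 2)
      (sSup ((fun x => ‖gradient f x‖) '' S) * Metric.diam S))
    (x s g : ℕ → EuclideanSpace ℝ (Fin d))
    (hx0 : x 0 ∈ S)
    (horacle : ∀ k, ∀ t ∈ S, |⟪gradient f (x k) - g k, t - x k⟫| ≤ δ)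
    (hsS : ∀ k, s k ∈ S)
    (hmin : ∀ k, ∀ t ∈ S, ⟪g k, s k - x k⟫ ≤ ⟪g k, t - x k⟫)
    (hupd : ∀ k, x (k + 1) =
      x k + (max (⟪g k, x k - s k⟫ - δ) 0 / C) • (s k - x k)) :
    ∀ K : ℕ, ∃ k ≤ K,
      sSup ((fun t => ⟪gradient f (x k), x k - t⟫) '' S) ≤
        Real.sqrt (2 * C * (f (x 0) - sInf (f '' S)) / (K + 1)) + 2 * δ :=
  nonconvex_fw_delta_oracle_rate_general S hScomp hSconv f L C δ hdiff hLip hC x s g hx0 horacle hsS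
    hmin hupd
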